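/- Let p be a prime, let m, w be natural numbers with 1 ≤ m < p, and let γ be a partition of m. Then for all natural numbers a, b with ⌊(w+1)/2⌋ ≤ a < b ≤ w one has π(γ⋆(bp, (w−b)p)) > π(γ⋆(ap, (w−a)p)). In particular, the hook products π(γ⋆(ap, (w−a)p)) for a ranging over ⌊(w+1)/2⌋, …, w are pairwise distinct. -/

import Mathlib

/-- The hook length of the cell in (0-based) row `i` and column `j` of the Young diagram of
the partition whose parts are given by the list `L`: with 1-based indices `(i+1, j+1)`,
this is `(λ_{i+1} - (j+1)) + (λ'_{j+1} - (i+1)) + 1`, where `λ'_{j+1}` is the number of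
parts of size at least `j+1`. -/
def hook (L : List ℕ) (i j : ℕ) : ℕ :=
  (L.getD i 0 - (j + 1)) + (L.countP (fun a => decide (j + 1 ≤ a)) - (i + 1)) + 1

/-- The product `π(λ)` of all hook lengths of the partition `λ` given by the list `L`. -/
def hookProd (L : List ℕ) : ℕ :=
  ∏ i ∈ Finset.range L.length, ∏ j ∈ Finset.range (L.getD i 0), hook L i j

/-- `γ ⋆ (x, y)`: add `x` to the first part of `γ` and append `y` trailing parts equal to `1`. -/
def starPartition (L : List ℕ) (x y : ℕ) : List ℕ :=
  (L.headD 0 + x) :: (L.tail ++ List.replicate y 1)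

/-! Adding `x` cells to the first row of `γ` and `y` cells of size `1` below it shifts the hook
lengths of `γ` by `x` on its first row and by `y` on its first column, and the new cells have
hook lengths `1, …, x` and `1, …, y`; hence
`π(γ⋆(x, y)) = x! y! ∏_{(i,j) ∈ γ} (h_{ij} + [i = 0] x + [j = 0] y)`.

Moving `p` cells from the leg to the arm when `x ≥ y + p` keeps the corner hook and does not
decrease the other first-row factors. What remains is to compare `x! (y+p)! ∏_d (d + y + p)`
with `(x+p)! y! ∏_d (d + y)`, where `d` runs over the first-column hooks of `γ` below the corner.
These `d` are distinct and lie strictly between `0` and `p` (as `m < p`), so `∏_d (d + y)` cancels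
against the factors `y + d` of `(y+1)⋯(y+p)`, and each remaining factor `y + t` (`t` not a `d`) or
`d + y + p` is matched with a factor `x + t` or `x + d` at least as large, strictly so for
`t = p`, which is never a `d`. -/

open Finset
open scoped Nat

lemma factorial_mul_prod_Ioc (y p : ℕ) : y ! * ∏ t ∈ Ioc 0 p, (t + y) = (y + p)! := by
  induction p with
  | zero => simp
  | succ p ih =>
    rw [prod_Ioc_succ_top p.zero_le, ← mul_assoc, ih, ← add_assoc, Nat.factorial_succ]
    ring

lemma factorial_mul_prod_lt_of_subset_Ioo {D : Finset ℕ} {p x y : ℕ} (hp : 0 < p)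
    (hD : D ⊆ Ioo 0 p) (hxy : y + p ≤ x) :
    x ! * ((∏ d ∈ D, (d + (y + p))) * (y + p)!) < (x + p)! * ((∏ d ∈ D, (d + y)) * y !) := by
  have hsplit (z : ℕ) : (z + p)! = z ! * ((∏ t ∈ Ioc 0 p \ D, (t + z)) * ∏ d ∈ D, (d + z)) := by
    rw [prod_sdiff (hD.trans Ioo_subset_Ioc_self), factorial_mul_prod_Ioc]
  have hrest : (Ioc 0 p \ D).Nonempty :=
    ⟨p, mem_sdiff.2 ⟨by simp [hp], fun h => by simpa using hD h⟩⟩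
  have key : (∏ d ∈ D, (d + (y + p))) * ∏ t ∈ Ioc 0 p \ D, (t + y)
      < (∏ d ∈ D, (d + x)) * ∏ t ∈ Ioc 0 p \ D, (t + x) :=
    Nat.mul_lt_mul_of_le_of_lt (prod_le_prod' fun d _ => by omega)
      (prod_lt_prod_of_nonempty
        (fun t ht => by have := (mem_Ioc.1 (mem_sdiff.1 ht).1).1; omega)
        (fun t _ => by omega) hrest)
      (prod_pos fun d hd => by have := (mem_Ioo.1 (hD hd)).1; omega)
  have hpos : 0 < x ! * y ! * ∏ d ∈ D, (d + y) :=
    Nat.mul_pos (by positivity) (prod_pos fun d hd => by have := (mem_Ioo.1 (hD hd)).1; omega)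
  rw [hsplit y, hsplit x]
  convert (Nat.mul_lt_mul_left hpos).2 key using 1 <;> ring

lemma prod_range_sub_eq_factorial (n : ℕ) : ∏ k ∈ range n, (n - k) = n ! := by
  rw [← Nat.descFactorial_eq_prod_range, Nat.descFactorial_self]

lemma starPartition_cons (g : ℕ) (T : List ℕ) (x y : ℕ) :
    starPartition (g :: T) x y = (g + x) :: (T ++ List.replicate y 1) := rfl

section StarPartition

variable {g : ℕ} {T : List ℕ}

lemma countP_starPartition_of_lt {j : ℕ} (hj : j < g) (x y : ℕ) :
    (starPartition (g :: T) x y).countP (fun a => decide (j + 1 ≤ a)) =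
      (g :: T).countP (fun a => decide (j + 1 ≤ a)) + if j = 0 then y else 0 := by
  simp only [starPartition_cons, List.countP_cons, List.countP_append, List.countP_replicate]
  split_ifs <;> simp_all <;> omega

lemma countP_one_le_cons (hT : ∀ t ∈ T, 0 < t) (hg : 0 < g) :
    (g :: T).countP (fun a => decide (0 + 1 ≤ a)) = T.length + 1 := by
  rw [List.countP_eq_length.2 fun t ht => ?_]
  · rfl
  · rcases List.mem_cons.1 ht with rfl | ht
    · simpa using Nat.one_le_iff_ne_zero.2 hg.ne'
    · simpa using Nat.one_le_iff_ne_zero.2 (hT t ht).ne'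

lemma getD_starPartition {i : ℕ} (hi : i < T.length + 1) (x y : ℕ) :
    (starPartition (g :: T) x y).getD i 0 = (g :: T).getD i 0 + if i = 0 then x else 0 := by
  cases i with
  | zero => simp [starPartition_cons]
  | succ i =>
    simp only [starPartition_cons, List.getD_cons_succ, List.getD_append T _ 0 i (by omega)]
    simp

lemma getD_cons_le (hT : ∀ t ∈ T, t ≤ g) (i : ℕ) : (g :: T).getD i 0 ≤ g := by
  cases i with
  | zero => rfl
  | succ i =>
    rw [List.getD_cons_succ]
    by_cases hi : i < T.length
    · rw [List.getD_eq_getElem T 0 hi]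
      exact hT _ (List.getElem_mem hi)
    · rw [List.getD_eq_default T 0 (by omega)]
      exact Nat.zero_le g

lemma hook_starPartition_of_mem (hT : ∀ t ∈ T, 0 < t ∧ t ≤ g) {i j : ℕ}
    (hi : i < T.length + 1) (hj : j < (g :: T).getD i 0) (x y : ℕ) :
    hook (starPartition (g :: T) x y) i j =
      hook (g :: T) i j + (if i = 0 then x else 0) + if j = 0 then y else 0 := by
  have hjg : j < g := hj.trans_le (getD_cons_le (fun t ht => (hT t ht).2) i)
  have hcol : (g :: T).countP (fun a => decide (0 + 1 ≤ a)) = T.length + 1 :=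
    countP_one_le_cons (fun t ht => (hT t ht).1) (by omega)
  rw [hook, hook, getD_starPartition hi, countP_starPartition_of_lt hjg]
  split_ifs <;> subst_vars <;> omega

lemma hook_starPartition_arm (hT : ∀ t ∈ T, t ≤ g) (hg : 0 < g) {k x : ℕ} (hk : k < x)
    (y : ℕ) :
    hook (starPartition (g :: T) x y) 0 (g + k) = x - k := by
  have hcount : (starPartition (g :: T) x y).countP (fun a => decide (g + k + 1 ≤ a)) = 1 := by
    have hTzero : T.countP (fun a => decide (g + k + 1 ≤ a)) = 0 := by
      rw [List.countP_eq_zero]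
      intro t ht
      have := hT t ht
      simp only [decide_eq_true_eq]
      omega
    simp only [starPartition_cons, List.countP_cons, List.countP_append, List.countP_replicate,
      hTzero]
    split_ifs <;> simp_all
  rw [hook, hcount]
  simp only [starPartition_cons, List.getD_cons_zero]
  omega

lemma getD_starPartition_leg (x : ℕ) {k y : ℕ} (hk : k < y) :
    (starPartition (g :: T) x y).getD (T.length + 1 + k) 0 = 1 := by
  rw [starPartition_cons, add_right_comm, List.getD_cons_succ,
    List.getD_append_right T _ 0 _ (by omega), List.getD_eq_getElem _ 0 (by simp; omega)]
  simp

lemma hook_starPartition_leg (hT : ∀ t ∈ T, 0 < t) (hg : 0 < g) (x : ℕ) {k y : ℕ}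
    (hk : k < y) :
    hook (starPartition (g :: T) x y) (T.length + 1 + k) 0 = y - k := by
  have hcount : (starPartition (g :: T) x y).countP (fun a => decide (0 + 1 ≤ a)) =
      T.length + 1 + y := by
    rw [List.countP_eq_length.2 fun t ht => ?_]
    · simp [starPartition_cons]; omega
    · simp only [starPartition_cons, List.mem_cons, List.mem_append, List.mem_replicate] at ht
      rcases ht with rfl | ht | ⟨-, rfl⟩
      · simp only [decide_eq_true_eq]; omega
      · simpa using Nat.one_le_iff_ne_zero.2 (hT t ht).ne'
      · simp
  rw [hook, hcount, getD_starPartition_leg x hk]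
  omega

theorem hookProd_starPartition (hT : ∀ t ∈ T, 0 < t ∧ t ≤ g) (hg : 0 < g) (x y : ℕ) :
    hookProd (starPartition (g :: T) x y) =
      (∏ i ∈ range (T.length + 1), ∏ j ∈ range ((g :: T).getD i 0),
        (hook (g :: T) i j + (if i = 0 then x else 0) + if j = 0 then y else 0)) * x ! * y ! := by
  have hlen : (starPartition (g :: T) x y).length = T.length + 1 + y := by
    simp only [starPartition_cons, List.length_cons, List.length_append, List.length_replicate]
    omega
  have hrow : ∀ i ∈ range (T.length + 1),
      ∏ j ∈ range ((starPartition (g :: T) x y).getD i 0),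
          hook (starPartition (g :: T) x y) i j =
        (∏ j ∈ range ((g :: T).getD i 0),
          (hook (g :: T) i j + (if i = 0 then x else 0) + if j = 0 then y else 0)) *
        if i = 0 then x ! else 1 := by
    intro i hi
    rw [mem_range] at hi
    rw [getD_starPartition hi, prod_range_add]
    congr 1
    · exact prod_congr rfl fun j hj => hook_starPartition_of_mem hT hi (mem_range.1 hj) x y
    · split_ifs with hi0
      · subst hi0
        rw [← prod_range_sub_eq_factorial]
        exact prod_congr rfl fun k hk =>
          hook_starPartition_arm (fun t ht => (hT t ht).2) hg (mem_range.1 hk) y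
      · simp
  have hleg : ∀ k ∈ range y,
      ∏ j ∈ range ((starPartition (g :: T) x y).getD (T.length + 1 + k) 0),
        hook (starPartition (g :: T) x y) (T.length + 1 + k) j = y - k := by
    intro k hk
    rw [getD_starPartition_leg x (mem_range.1 hk), prod_range_one,
      hook_starPartition_leg (fun t ht => (hT t ht).1) hg x (mem_range.1 hk)]
  rw [hookProd, hlen, prod_range_add, prod_congr rfl hrow, prod_mul_distrib, prod_ite_eq',
    prod_congr rfl hleg, prod_range_sub_eq_factorial]
  simp

lemma prod_cells_cons {M : Type*} [CommMonoid M] (hT : ∀ t ∈ T, 0 < t) (F : ℕ → ℕ → M) :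
    ∏ i ∈ range (T.length + 1), ∏ j ∈ range ((g :: T).getD i 0), F i j =
      (∏ j ∈ range g, F 0 j) * (∏ i ∈ range T.length, F (i + 1) 0) *
        ∏ i ∈ range T.length, ∏ j ∈ range (T.getD i 0 - 1), F (i + 1) (j + 1) := by
  have hrow : ∀ i ∈ range T.length, ∏ j ∈ range (T.getD i 0), F (i + 1) j =
      F (i + 1) 0 * ∏ j ∈ range (T.getD i 0 - 1), F (i + 1) (j + 1) := by
    intro i hi
    have hTi : 0 < T.getD i 0 := by
      rw [List.getD_eq_getElem T 0 (mem_range.1 hi)]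
      exact hT _ (List.getElem_mem _)
    rw [← Nat.sub_add_cancel hTi, prod_range_succ', Nat.add_sub_cancel, mul_comm]
  simp only [prod_range_succ' _ T.length, List.getD_cons_succ, List.getD_cons_zero,
    prod_congr rfl hrow, prod_mul_distrib]
  rw [mul_comm, ← mul_assoc]

lemma hook_cons_succ_zero (hT : ∀ t ∈ T, 0 < t) (hg : 0 < g) {i : ℕ} (hi : i < T.length) :
    hook (g :: T) (i + 1) 0 = T.getD i 0 + (T.length - (i + 1)) := by
  have hTi : 0 < T.getD i 0 := by
    rw [List.getD_eq_getElem T 0 hi]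
    exact hT _ (List.getElem_mem _)
  rw [hook, countP_one_le_cons hT hg, List.getD_cons_succ]
  omega

lemma strictAntiOn_hook_cons_succ_zero (hT : ∀ t ∈ T, 0 < t) (hg : 0 < g)
    (hsort : T.Pairwise (· ≥ ·)) :
    StrictAntiOn (fun i => hook (g :: T) (i + 1) 0) (range T.length) := by
  intro i hi i' hi' hii'
  simp only [coe_range, Set.mem_Iio] at hi hi'
  have hle : T.getD i' 0 ≤ T.getD i 0 := by
    rw [List.getD_eq_getElem T 0 hi, List.getD_eq_getElem T 0 hi']
    exact List.pairwise_iff_getElem.1 hsort i i' hi hi' hii'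
  simp only [hook_cons_succ_zero hT hg hi, hook_cons_succ_zero hT hg hi']
  omega

theorem hookProd_starPartition_lt (hT : ∀ t ∈ T, 0 < t ∧ t ≤ g) (hg : 0 < g)
    (hsort : T.Pairwise (· ≥ ·)) {p x y : ℕ} (hp : 0 < p)
    (hleg : ∀ i < T.length, hook (g :: T) (i + 1) 0 < p) (hxy : y + p ≤ x) :
    hookProd (starPartition (g :: T) x (y + p)) < hookProd (starPartition (g :: T) (x + p) y) := by
  have hpos : ∀ t ∈ T, 0 < t := fun t ht => (hT t ht).1
  set D := (range T.length).image fun i => hook (g :: T) (i + 1) 0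
  have hD : D ⊆ Ioo 0 p := by
    simp only [D, image_subset_iff, mem_range, mem_Ioo]
    exact fun i hi => ⟨by simp [hook], hleg i hi⟩
  have hcol (z : ℕ) :
      ∏ i ∈ range T.length, (hook (g :: T) (i + 1) 0 + z) = ∏ d ∈ D, (d + z) :=
    (prod_image (f := fun d => d + z) (strictAntiOn_hook_cons_succ_zero hpos hg hsort).injOn).symm
  have harm : ∏ j ∈ range g, (hook (g :: T) 0 j + x + if j = 0 then y + p else 0) ≤
      ∏ j ∈ range g, (hook (g :: T) 0 j + (x + p) + if j = 0 then y else 0) :=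
    prod_le_prod' fun j _ => by split_ifs <;> omega
  have hinner :
      0 < ∏ i ∈ range T.length, ∏ j ∈ range (T.getD i 0 - 1), hook (g :: T) (i + 1) (j + 1) :=
    prod_pos fun i _ => prod_pos fun j _ => by simp [hook]
  have harm_pos :
      0 < ∏ j ∈ range g, (hook (g :: T) 0 j + (x + p) + if j = 0 then y else 0) :=
    prod_pos fun j _ => by simp [hook]
  rw [hookProd_starPartition hT hg, hookProd_starPartition hT hg, prod_cells_cons hpos,
    prod_cells_cons hpos]
  simp only [↓reduceIte, Nat.add_one_ne_zero, add_zero, hcol]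
  convert Nat.mul_lt_mul_of_le_of_lt (Nat.mul_le_mul_right _ harm)
    (factorial_mul_prod_lt_of_subset_Ioo hp hD hxy) (Nat.mul_pos harm_pos hinner) using 1 <;> ring

end StarPartition

theorem stmt2_general (p m w : ℕ) (hm : 1 ≤ m) (hmp : m < p)
    (γ : List ℕ) (hsort : γ.Pairwise (· ≥ ·)) (hpos : ∀ c ∈ γ, 0 < c) (hsum : γ.sum = m) :
    (∀ a b : ℕ, (w + 1) / 2 ≤ a → a < b → b ≤ w →
      hookProd (starPartition γ (a * p) ((w - a) * p)) <
        hookProd (starPartition γ (b * p) ((w - b) * p))) ∧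
    (∀ a b : ℕ, (w + 1) / 2 ≤ a → a ≤ w → (w + 1) / 2 ≤ b → b ≤ w → a ≠ b →
      hookProd (starPartition γ (a * p) ((w - a) * p)) ≠
        hookProd (starPartition γ (b * p) ((w - b) * p))) := by
  obtain ⟨g, T, rfl⟩ : ∃ g T, γ = g :: T :=
    List.exists_cons_of_ne_nil (by rintro rfl; simp at hsum; omega)
  obtain ⟨hhead, hTsort⟩ := List.pairwise_cons.1 hsort
  have hT : ∀ t ∈ T, 0 < t ∧ t ≤ g := fun t ht =>
    ⟨hpos t (List.mem_cons_of_mem g ht), hhead t ht⟩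
  have hg : 0 < g := hpos g List.mem_cons_self
  have hleg : ∀ i < T.length, hook (g :: T) (i + 1) 0 < p := by
    intro i hi
    have hlen := List.length_le_sum_of_one_le T fun t ht => (hT t ht).1
    have hTi := (hT _ (List.getElem_mem hi)).2
    rw [hook_cons_succ_zero (fun t ht => (hT t ht).1) hg hi, List.getD_eq_getElem T 0 hi]
    rw [List.sum_cons] at hsum
    omega
  have hmono : StrictMonoOn (fun a => hookProd (starPartition (g :: T) (a * p) ((w - a) * p)))
      (Set.Icc ((w + 1) / 2) w) := by
    refine strictMonoOn_of_lt_add_one Set.ordConnected_Icc fun a _ ha ha1 => ?_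
    have hwa : w - a = w - (a + 1) + 1 := by grind
    have hstep : (w - (a + 1)) * p + p ≤ a * p := by
      rw [← add_one_mul, ← hwa]
      exact Nat.mul_le_mul_right p (by grind)
    simp only [hwa, add_one_mul]
    exact hookProd_starPartition_lt hT hg hTsort (by omega) hleg hstep
  exact ⟨fun a b ha hab hb => hmono ⟨ha, by omega⟩ ⟨by omega, hb⟩ hab,
    fun a b ha haw hb hbw hab => hmono.injOn.ne ⟨ha, haw⟩ ⟨hb, hbw⟩ hab⟩

/-- For a prime `p`, `1 ≤ m < p` and a partition `γ` of `m`, the hook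
products `π(γ⋆(ap, (w-a)p))` are strictly increasing in `a` for
`⌊(w+1)/2⌋ ≤ a ≤ w`; in particular they are pairwise distinct. -/
theorem stmt2 (p m w : ℕ) (hp : p.Prime) (hm : 1 ≤ m) (hmp : m < p)
    (γ : List ℕ) (hsort : γ.Pairwise (· ≥ ·)) (hpos : ∀ c ∈ γ, 0 < c) (hsum : γ.sum = m) :
    (∀ a b : ℕ, (w + 1) / 2 ≤ a → a < b → b ≤ w →
      hookProd (starPartition γ (a * p) ((w - a) * p)) <
        hookProd (starPartition γ (b * p) ((w - b) * p))) ∧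
    (∀ a b : ℕ, (w + 1) / 2 ≤ a → a ≤ w → (w + 1) / 2 ≤ b → b ≤ w → a ≠ b →
      hookProd (starPartition γ (a * p) ((w - a) * p)) ≠
        hookProd (starPartition γ (b * p) ((w - b) * p))) :=
  stmt2_general p m w hm hmp γ hsort hpos hsum
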